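/- arXiv:2407.00298 — 6 statements merged into one kernel-verified Lean document; each statement's English description precedes it below -/
import Mathlib

section
/- Let $n_1, n_2$ be integers greater than 1, and set $g = \gcd(1-4n_1^2,\ 1-4n_2^2,\ 1-4n_1n_2)$, $h = \gcd(1-2n_1,\ 1-2n_2)$, $k = \gcd(1+2n_1,\ 1+2n_2)$. Then $g = h\cdot k$. -/
/-!
With `a = 1 - 2n₁`, `b = 1 - 2n₂`, `c = 1 + 2n₁`, `d = 1 + 2n₂` we have
`(a + bX)(c + dX) = (1 - 4n₁²) + 2(1 - 4n₁n₂) X + (1 - 4n₂²) X²`, so by Gauss's lemma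
(the content is multiplicative) `h * k = gcd(1 - 4n₁², 2(1 - 4n₁n₂), 1 - 4n₂²)`.
Since `1 - 4n₁²` is odd, the factor `2` can be dropped, which gives `g`.
-/

open Polynomial

section Content

variable {R : Type*} [CommRing R] [NormalizedGCDMonoid R]

theorem Polynomial.content_C_add_C_mul_X (a b : R) : (C a + C b * X).content = gcd a b := by
  rw [content_eq_gcd_range_of_lt _ 2 (by compute_degree!)]
  simp [Finset.range_add_one, coeff_X, coeff_C, (normalize_associated a).gcd_eq_left, gcd_comm b]

theorem Polynomial.content_C_add_C_mul_X_add_C_mul_X_sq (a b c : R) :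
    (C a + C b * X + C c * X ^ 2).content = gcd a (gcd b c) := by
  rw [content_eq_gcd_range_of_lt _ 3 (by compute_degree!)]
  simp [Finset.range_add_one, coeff_X, coeff_C, (normalize_associated a).gcd_eq_right, gcd_comm c,
    gcd_assoc]
  rw [← gcd_assoc, gcd_comm b a, gcd_assoc]

theorem IsCoprime.gcd_mul_left_cancel_right {x u : R} (h : IsCoprime u x) (y : R) :
    gcd x (u * y) = gcd x y :=
  dvd_antisymm_of_normalize_eq (normalize_gcd _ _) (normalize_gcd _ _)
    (dvd_gcd (gcd_dvd_left _ _)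
      ((h.symm.of_isCoprime_of_dvd_left (gcd_dvd_left _ _)).dvd_of_dvd_mul_left
        (gcd_dvd_right _ _)))
    (gcd_dvd_gcd dvd_rfl (dvd_mul_left _ _))

end Content

theorem gcd_mul_gcd_eq_gcd_coeffs {R : Type*} [CommRing R] [StrongNormalizedGCDMonoid R]
    (a b c d : R) : gcd a b * gcd c d = gcd (a * c) (gcd (a * d + b * c) (b * d)) := by
  have hprod : (C a + C b * X) * (C c + C d * X) =
      C (a * c) + C (a * d + b * c) * X + C (b * d) * X ^ 2 := by
    simp only [C_mul, C_add]
    ring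
  rw [← content_C_add_C_mul_X, ← content_C_add_C_mul_X, ← content_mul, hprod,
    content_C_add_C_mul_X_add_C_mul_X_sq]

theorem stmt_4_general (n₁ n₂ : ℤ)
    (g h k : ℕ)
    (hg : g = Int.gcd (1 - 4*n₁^2) (Int.gcd (1 - 4*n₂^2) (1 - 4*n₁*n₂)))
    (hh : h = Int.gcd (1 - 2*n₁) (1 - 2*n₂))
    (hk : k = Int.gcd (1 + 2*n₁) (1 + 2*n₂)) :
    g = h * k := by
  have gauss := gcd_mul_gcd_eq_gcd_coeffs (1 - 2*n₁) (1 - 2*n₂) (1 + 2*n₁) (1 + 2*n₂)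
  rw [show (1 - 2*n₁) * (1 + 2*n₁) = 1 - 4*n₁^2 by ring,
    show (1 - 2*n₂) * (1 + 2*n₂) = 1 - 4*n₂^2 by ring,
    show (1 - 2*n₁) * (1 + 2*n₂) + (1 - 2*n₂) * (1 + 2*n₁) = 2 * (1 - 4*n₁*n₂) by ring] at gauss
  have hodd : IsCoprime 2 (gcd (1 - 4*n₁^2) (1 - 4*n₂^2)) :=
    IsCoprime.of_isCoprime_of_dvd_right ⟨2 * n₁ ^ 2, 1, by ring⟩ (gcd_dvd_left _ _)
  zify
  rw [hg, hh, hk, Int.coe_gcd, Int.coe_gcd, Int.coe_gcd, Int.coe_gcd, gauss,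
    gcd_comm (2 * _), ← gcd_assoc, ← gcd_assoc, hodd.gcd_mul_left_cancel_right]

theorem stmt_4 (n₁ n₂ : ℤ) (h₁ : 1 < n₁) (h₂ : 1 < n₂)
    (g h k : ℕ)
    (hg : g = Int.gcd (1 - 4*n₁^2) (Int.gcd (1 - 4*n₂^2) (1 - 4*n₁*n₂)))
    (hh : h = Int.gcd (1 - 2*n₁) (1 - 2*n₂))
    (hk : k = Int.gcd (1 + 2*n₁) (1 + 2*n₂)) :
    g = h * k :=
  stmt_4_general n₁ n₂ g h k hg hh hk
end

section
/- Let $n_1, \dots, n_\ell$ be integers greater than 1. Then $\gcd\{1-4n_i^2,\ 1-4n_in_j : i,j \in \{1,\dots,\ell\}\} = \gcd\{1-4n_i^2,\ 2n_i-2n_j : i,j \in \{1,\dots,\ell\}\}$. -/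
open Finset in
theorem stmt_7 (ℓ : ℕ) (hℓ : 1 ≤ ℓ) (n : Fin ℓ → ℤ) (hn : ∀ i, 1 < n i) :
    GCDMonoid.gcd
      (Finset.univ.gcd (fun i : Fin ℓ => 1 - 4*(n i)^2))
      (Finset.univ.gcd (fun p : Fin ℓ × Fin ℓ => 1 - 4*(n p.1)*(n p.2))) =
    GCDMonoid.gcd
      (Finset.univ.gcd (fun i : Fin ℓ => 1 - 4*(n i)^2))
      (Finset.univ.gcd (fun p : Fin ℓ × Fin ℓ => 2*(n p.1) - 2*(n p.2))) := by
  set A := Finset.univ.gcd (fun i : Fin ℓ => 1 - 4*(n i)^2) with hA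
  set B := Finset.univ.gcd (fun p : Fin ℓ × Fin ℓ => 1 - 4*(n p.1)*(n p.2)) with hB
  set C := Finset.univ.gcd (fun p : Fin ℓ × Fin ℓ => 2*(n p.1) - 2*(n p.2)) with hC
  have hAi : ∀ i : Fin ℓ, A ∣ 1 - 4*(n i)^2 := fun i =>
    Finset.gcd_dvd (Finset.mem_univ i)
  have hcop : ∀ d : ℤ, d ∣ A → ∀ i : Fin ℓ, IsCoprime d (2 * n i) := by
    intro d hd i
    obtain ⟨k, hk⟩ := hd.trans (hAi i)
    exact ⟨k, 2 * n i, by ring_nf; ring_nf at hk; linarith⟩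
  have h1 : GCDMonoid.gcd A B ∣ GCDMonoid.gcd A C := by
    have hdA : GCDMonoid.gcd A B ∣ A := gcd_dvd_left A B
    refine dvd_gcd hdA (Finset.dvd_gcd ?_)
    intro p _
    have hB' : GCDMonoid.gcd A B ∣ 1 - 4*(n p.1)*(n p.2) :=
      (gcd_dvd_right A B).trans (Finset.gcd_dvd (Finset.mem_univ p))
    have hA' : GCDMonoid.gcd A B ∣ 1 - 4*(n p.1)^2 := hdA.trans (hAi p.1)
    have hmul : GCDMonoid.gcd A B ∣ (2 * n p.1) * (2*(n p.1) - 2*(n p.2)) := by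
      have := dvd_sub hB' hA'
      have heq : (1 - 4*(n p.1)*(n p.2)) - (1 - 4*(n p.1)^2)
          = (2 * n p.1) * (2*(n p.1) - 2*(n p.2)) := by ring
      rwa [heq] at this
    exact (hcop _ hdA p.1).dvd_of_dvd_mul_left hmul
  have h2 : GCDMonoid.gcd A C ∣ GCDMonoid.gcd A B := by
    have hdA : GCDMonoid.gcd A C ∣ A := gcd_dvd_left A C
    refine dvd_gcd hdA (Finset.dvd_gcd ?_)
    intro p _
    have hC' : GCDMonoid.gcd A C ∣ 2*(n p.1) - 2*(n p.2) :=
      (gcd_dvd_right A C).trans (Finset.gcd_dvd (Finset.mem_univ p))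
    have hA' : GCDMonoid.gcd A C ∣ 1 - 4*(n p.1)^2 := hdA.trans (hAi p.1)
    have heq : 1 - 4*(n p.1)*(n p.2)
        = (1 - 4*(n p.1)^2) + (2 * n p.1) * (2*(n p.1) - 2*(n p.2)) := by ring
    rw [heq]
    exact dvd_add hA' (Dvd.dvd.mul_left hC' _)
  have hn1 : (0:ℤ) ≤ GCDMonoid.gcd A B := by rw [← Int.coe_gcd]; positivity
  have hn2 : (0:ℤ) ≤ GCDMonoid.gcd A C := by rw [← Int.coe_gcd]; positivity
  exact Int.dvd_antisymm hn1 hn2 h1 h2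
end

section
/- Let $n_1, \dots, n_\ell$ be integers greater than 1, and set $g = \gcd\{1-4n_i^2,\ 1-4n_in_j : i,j\}$, $h = \gcd\{1-2n_i : i\}$, $k = \gcd\{1+2n_i : i\}$. Then $\gcd(h,k) = 1$ and $g = h\cdot k$. -/
open Finset in
theorem stmt_8 (ℓ : ℕ) (hℓ : 1 ≤ ℓ) (n : Fin ℓ → ℤ) (hn : ∀ i, 1 < n i)
    (g h k : ℤ)
    (hg : g = GCDMonoid.gcd
      (Finset.univ.gcd (fun i : Fin ℓ => 1 - 4*(n i)^2))
      (Finset.univ.gcd (fun p : Fin ℓ × Fin ℓ => 1 - 4*(n p.1)*(n p.2))))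
    (hh : h = Finset.univ.gcd (fun i : Fin ℓ => 1 - 2*(n i)))
    (hk : k = Finset.univ.gcd (fun i : Fin ℓ => 1 + 2*(n i))) :
    GCDMonoid.gcd h k = 1 ∧ g = h * k := by
  have i0 : Fin ℓ := ⟨0, hℓ⟩
  have hhd : ∀ i, h ∣ 1 - 2 * n i := fun i => hh ▸ Finset.gcd_dvd (mem_univ i)
  have hkd : ∀ i, k ∣ 1 + 2 * n i := fun i => hk ▸ Finset.gcd_dvd (mem_univ i)
  -- gcd h k = 1
  have hcop1 : GCDMonoid.gcd h k = 1 := by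
    set d : ℤ := GCDMonoid.gcd h k with hd
    have d1 : d ∣ 1 - 2 * n i0 := (gcd_dvd_left h k).trans (hhd i0)
    have d2 : d ∣ 1 + 2 * n i0 := (gcd_dvd_right h k).trans (hkd i0)
    have d3 : d ∣ 2 := by
      have h2 := dvd_add d1 d2
      have e : (1 - 2 * n i0) + (1 + 2 * n i0) = 2 := by ring
      rwa [e] at h2
    have dnn : 0 ≤ d := by rw [hd, ← Int.coe_gcd]; positivity
    have dle : d ≤ 2 := Int.le_of_dvd (by norm_num) d3
    interval_cases d
    · simp at d1; omega
    · rfl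
    · obtain ⟨c, hc⟩ := d1; omega
  refine ⟨hcop1, ?_⟩
  have hcop : IsCoprime h k := by
    rw [Int.isCoprime_iff_gcd_eq_one, Int.gcd]
    have := congrArg Int.natAbs hcop1
    rwa [← Int.coe_gcd, Int.natAbs_natCast, Int.natAbs_one, Int.gcd] at this
  -- h*k ∣ g
  have hk_dvd_g : h * k ∣ g := by
    rw [hg]
    refine dvd_gcd (Finset.dvd_gcd fun i _ => ?_) (Finset.dvd_gcd fun p _ => ?_)
    · have h2 := mul_dvd_mul (hhd i) (hkd i)
      have e : (1 - 2 * n i) * (1 + 2 * n i) = 1 - 4 * (n i)^2 := by ring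
      rwa [e] at h2
    · refine hcop.mul_dvd ?_ ?_
      · have e : 1 - 4 * n p.1 * n p.2 = (1 - 2 * n p.1) + 2 * n p.1 * (1 - 2 * n p.2) := by
          ring
        rw [e]
        exact dvd_add (hhd p.1) ((hhd p.2).mul_left _)
      · have e : 1 - 4 * n p.1 * n p.2 = (1 + 2 * n p.1) - 2 * n p.1 * (1 + 2 * n p.2) := by
          ring
        rw [e]
        exact dvd_sub (hkd p.1) ((hkd p.2).mul_left _)
  -- g divides generators
  have gsq : ∀ i, g ∣ 1 - 4 * (n i)^2 := fun i => by
    rw [hg]; exact (gcd_dvd_left _ _).trans (Finset.gcd_dvd (mem_univ i))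
  have gpr : ∀ i j, g ∣ 1 - 4 * n i * n j := fun i j => by
    rw [hg]; exact (gcd_dvd_right _ _).trans (Finset.gcd_dvd (mem_univ (i, j)))
  -- g ∣ n i - n j
  have gdiff : ∀ i j, g ∣ n i - n j := fun i j => by
    have d1 : g ∣ n i * ((1 - 4 * n i * n j) - (1 - 4 * (n i)^2)) :=
      ((dvd_sub (gpr i j) (gsq i)).mul_left _)
    have d2 : g ∣ (-(1 - 4 * (n i)^2)) * (n i - n j) :=
      ((gsq i).neg_right.mul_right _)
    have e : n i - n j = n i * ((1 - 4 * n i * n j) - (1 - 4 * (n i)^2))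
        - (-(1 - 4 * (n i)^2)) * (n i - n j) := by ring
    rw [e]; exact dvd_sub d1 d2
  -- g ∣ (1-2 n i)(1+2 n j)
  have gprod : ∀ i j, g ∣ (1 - 2 * n i) * (1 + 2 * n j) := fun i j => by
    have e : (1 - 2 * n i) * (1 + 2 * n j) = (1 - 4 * n i * n j) - 2 * (n i - n j) := by ring
    rw [e]; exact dvd_sub (gpr i j) ((gdiff i j).mul_left _)
  -- g ∣ (1-2 n i) * k
  have gcol : ∀ i, g ∣ (1 - 2 * n i) * k := fun i => by
    have h1 : g ∣ Finset.univ.gcd (fun j : Fin ℓ => (1 - 2 * n i) * (1 + 2 * n j)) :=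
      Finset.dvd_gcd fun j _ => gprod i j
    rw [Finset.gcd_mul_left] at h1
    rw [hk]
    exact ((Associated.mul_right (associated_normalize (1 - 2 * n i)) _).dvd_iff_dvd_right).mpr h1
  have g_dvd_hk : g ∣ h * k := by
    have h1 : g ∣ Finset.univ.gcd (fun i : Fin ℓ => (1 - 2 * n i) * k) :=
      Finset.dvd_gcd fun i _ => gcol i
    rw [Finset.gcd_mul_right, ← hh] at h1
    rwa [hk, Finset.normalize_gcd, ← hk] at h1
  -- nonnegativity and antisymmetry
  have gnn : 0 ≤ g := by rw [hg, ← Int.coe_gcd]; positivity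
  have hnn : 0 ≤ h * k := by
    have h1 : 0 ≤ h := by
      rw [hh, ← Finset.normalize_gcd, ← Int.abs_eq_normalize]; exact abs_nonneg _
    have h2 : 0 ≤ k := by
      rw [hk, ← Finset.normalize_gcd, ← Int.abs_eq_normalize]; exact abs_nonneg _
    exact mul_nonneg h1 h2
  exact Int.dvd_antisymm gnn hnn g_dvd_hk hk_dvd_g
end

section
/- Let $n_1, n_2, m_3$ be integers with $n_1, n_2, m_3 \ge 2$, and let $\partial_1$ be the $2\times 6$ integer matrix $\begin{bmatrix} 1 & -2n_1 & 1 & -2n_2 & 1-2m_3 & 0 \\ -2n_1 & 1 & -2n_2 & 1 & 0 & 1-2m_3\end{bmatrix}$. Then the gcd of all $2\times 2$ minors of $\partial_1$ equals $g = \gcd(1-4n_1^2,\ 1-4n_2^2,\ 1-4n_1n_2,\ 1-2m_3)$. -/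
/-!
Modulo `g = gcd(1 - 4n₁², 1 - 4n₂², 1 - 4n₁n₂, 1 - 2m₃)` the second row of `∂₁` is `-2n₁` times
the first, so every `2 × 2` minor is divisible by `g`. Conversely, the four generators of `g` are
themselves minors, on the column pairs `(0,1)`, `(2,3)`, `(0,3)` and `(0,5)`.
-/

theorem dvd_mul_sub_mul_of_dvd_sub_mul {ι R : Type*} [CommRing R] {g c : R} {x y : ι → R}
    (h : ∀ j, g ∣ y j - c * x j) (i j : ι) : g ∣ x i * y j - x j * y i := by
  have key : x i * y j - x j * y i = x i * (y j - c * x j) - x j * (y i - c * x i) := by ring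
  rw [key]
  exact dvd_sub ((h j).mul_left _) ((h i).mul_left _)

theorem Int.finset_gcd_nonneg {ι : Type*} (s : Finset ι) (f : ι → ℤ) : 0 ≤ s.gcd f := by
  rw [← Finset.normalize_gcd, ← Int.abs_eq_normalize]
  exact abs_nonneg _

abbrev boundaryMatrix (n₁ n₂ m₃ : ℤ) : Matrix (Fin 2) (Fin 6) ℤ :=
  !![1, -2*n₁, 1, -2*n₂, 1-2*m₃, 0;
     -2*n₁, 1, -2*n₂, 1, 0, 1-2*m₃]

/-- Modulo `g`, the relations `4n₁² ≡ 4n₁n₂ ≡ 1` force `n₁ ≡ n₂`. -/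
theorem boundaryMatrix_dvd_row_sub {g n₁ n₂ m₃ : ℤ} (hA : g ∣ 1 - 4*n₁^2) (hC : g ∣ 1 - 4*n₁*n₂)
    (hD : g ∣ 1 - 2*m₃) (j : Fin 6) :
    g ∣ boundaryMatrix n₁ n₂ m₃ 1 j - (-2*n₁) * boundaryMatrix n₁ n₂ m₃ 0 j := by
  have comb (a c d : ℤ) : g ∣ a * (1 - 4*n₁^2) + c * (1 - 4*n₁*n₂) + d * (1 - 2*m₃) :=
    dvd_add (dvd_add (hA.mul_left a) (hC.mul_left c)) (hD.mul_left d)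
  fin_cases j <;>
    simp only [Fin.isValue, Fin.zero_eta, Fin.mk_one, Fin.reduceFinMk, Matrix.of_apply,
      Matrix.cons_val', Matrix.cons_val, Matrix.cons_val_zero, Matrix.cons_val_one,
      Matrix.cons_val_fin_one]
  · convert comb 0 0 0 using 1; ring
  · convert comb 1 0 0 using 1; ring
  · convert comb (-2*n₂) (2*n₁) 0 using 1; ring
  · convert comb 0 1 0 using 1; ring
  · convert comb 0 0 (2*n₁) using 1; ring
  · convert comb 0 0 1 using 1; ring

open Finset in
theorem stmt_9_general (n₁ n₂ m₃ : ℤ)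
    (M : Matrix (Fin 2) (Fin 6) ℤ)
    (hM : M = !![1, -2*n₁, 1, -2*n₂, 1-2*m₃, 0;
                 -2*n₁, 1, -2*n₂, 1, 0, 1-2*m₃]) :
    Finset.univ.gcd (fun p : Fin 6 × Fin 6 => M 0 p.1 * M 1 p.2 - M 0 p.2 * M 1 p.1) =
    (Int.gcd (1 - 4*n₁^2) (Int.gcd (1 - 4*n₂^2) (Int.gcd (1 - 4*n₁*n₂) (1 - 2*m₃))) : ℤ) := by
  change M = boundaryMatrix n₁ n₂ m₃ at hM
  subst hM
  set L := univ.gcd fun p : Fin 6 × Fin 6 =>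
    boundaryMatrix n₁ n₂ m₃ 0 p.1 * boundaryMatrix n₁ n₂ m₃ 1 p.2 -
      boundaryMatrix n₁ n₂ m₃ 0 p.2 * boundaryMatrix n₁ n₂ m₃ 1 p.1
  set g : ℤ := ((1 - 4*n₁^2).gcd ((1 - 4*n₂^2).gcd ((1 - 4*n₁*n₂).gcd (1 - 2*m₃) : ℤ) : ℤ) : ℤ)
  have hA : g ∣ 1 - 4*n₁^2 := Int.gcd_dvd_left _ _
  have hCD : g ∣ ((1 - 4*n₁*n₂).gcd (1 - 2*m₃) : ℤ) :=
    (Int.gcd_dvd_right _ _).trans (Int.gcd_dvd_right _ _)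
  have hC : g ∣ 1 - 4*n₁*n₂ := hCD.trans (Int.gcd_dvd_left _ _)
  have hD : g ∣ 1 - 2*m₃ := hCD.trans (Int.gcd_dvd_right _ _)
  have minor_dvd (i j : Fin 6) : L ∣ boundaryMatrix n₁ n₂ m₃ 0 i * boundaryMatrix n₁ n₂ m₃ 1 j -
      boundaryMatrix n₁ n₂ m₃ 0 j * boundaryMatrix n₁ n₂ m₃ 1 i :=
    Finset.gcd_dvd (mem_univ (i, j))
  refine Int.dvd_antisymm (Int.finset_gcd_nonneg _ _) (Int.natCast_nonneg _) ?_ ?_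
  · refine Int.dvd_coe_gcd ?_ (Int.dvd_coe_gcd ?_ (Int.dvd_coe_gcd ?_ ?_))
    · exact (minor_dvd 0 1).trans (dvd_of_eq (by simp; ring))
    · exact (minor_dvd 2 3).trans (dvd_of_eq (by simp; ring))
    · exact (minor_dvd 0 3).trans (dvd_of_eq (by simp; ring))
    · exact (minor_dvd 0 5).trans (dvd_of_eq (by simp))
  · exact Finset.dvd_gcd fun p _ =>
      dvd_mul_sub_mul_of_dvd_sub_mul (boundaryMatrix_dvd_row_sub hA hC hD) p.1 p.2

open Finset in
theorem stmt_9 (n₁ n₂ m₃ : ℤ) (h₁ : 2 ≤ n₁) (h₂ : 2 ≤ n₂) (h₃ : 2 ≤ m₃)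
    (M : Matrix (Fin 2) (Fin 6) ℤ)
    (hM : M = !![1, -2*n₁, 1, -2*n₂, 1-2*m₃, 0;
                 -2*n₁, 1, -2*n₂, 1, 0, 1-2*m₃]) :
    Finset.univ.gcd (fun p : Fin 6 × Fin 6 => M 0 p.1 * M 1 p.2 - M 0 p.2 * M 1 p.1) =
    (Int.gcd (1 - 4*n₁^2) (Int.gcd (1 - 4*n₂^2) (Int.gcd (1 - 4*n₁*n₂) (1 - 2*m₃))) : ℤ) :=
  stmt_9_general n₁ n₂ m₃ M hM
end

section
/- Let $n_1, n_2, n_3$ be integers greater than 1, and let $\partial_1$ be the $2\times 6$ integer matrix $\begin{bmatrix} 1 & -2n_1 & 1 & -2n_2 & 1 & -2n_3 \\ -2n_1 & 1 & -2n_2 & 1 & -2n_3 & 1\end{bmatrix}$. Then the gcd of all $2\times 2$ minors of $\partial_1$ equals $g = \gcd(1-4n_1^2,\ 1-4n_2^2,\ 1-4n_3^2,\ 1-4n_1n_2,\ 1-4n_1n_3,\ 1-4n_2n_3)$. -/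
/-!
Every column of `∂₁` has the shape `(1, -2a)` or `(-2a, 1)` with `a ∈ {n₁, n₂, n₃}`, so
every `2 × 2` minor is `±(1 - 4ab)` or `±2(a - b)`. The minors `1 - 4ab` all occur, and the
differences add nothing: `b - a = b (1 - 4a²) - a (1 - 4ab)`. Hence the minors and the six
numbers `1 - 4ab` have the same common divisors.
-/

section PairColumn

variable {R : Type*} [CommRing R]

def IsPairColumn (S : Set R) (c : Fin 2 → R) : Prop :=
  ∃ a ∈ S, c 0 = 1 ∧ c 1 = -2 * a ∨ c 0 = -2 * a ∧ c 1 = 1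

theorem dvd_sub_of_dvd_one_sub_four_mul {d a b : R} (ha : d ∣ 1 - 4 * a * a)
    (hab : d ∣ 1 - 4 * a * b) : d ∣ b - a := by
  have h : b - a = b * (1 - 4 * a * a) - a * (1 - 4 * a * b) := by ring
  rw [h]
  exact dvd_sub (ha.mul_left b) (hab.mul_left a)

theorem IsPairColumn.dvd_minor {S : Set R} {d : R}
    (hS : ∀ a ∈ S, ∀ b ∈ S, d ∣ 1 - 4 * a * b) {c c' : Fin 2 → R}
    (hc : IsPairColumn S c) (hc' : IsPairColumn S c') :
    d ∣ c 0 * c' 1 - c' 0 * c 1 := by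
  obtain ⟨a, ha, ⟨h0, h1⟩ | ⟨h0, h1⟩⟩ := hc <;>
    obtain ⟨b, hb, ⟨h0', h1'⟩ | ⟨h0', h1'⟩⟩ := hc' <;>
    rw [h0, h1, h0', h1']
  · convert (dvd_sub_of_dvd_one_sub_four_mul (hS b hb b hb) (hS b hb a ha)).mul_left 2 using 1
    ring
  · convert hS a ha b hb using 1
    ring
  · convert (hS a ha b hb).neg_right using 1
    ring
  · convert (dvd_sub_of_dvd_one_sub_four_mul (hS a ha a ha) (hS a ha b hb)).mul_left 2 using 1
    ring

end PairColumn

theorem dvd_one_sub_four_mul_of_dvd_gcd {d x y z : ℤ}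
    (h : d ∣ (Int.gcd (1 - 4*x^2) (Int.gcd (1 - 4*y^2) (Int.gcd (1 - 4*z^2)
      (Int.gcd (1 - 4*x*y) (Int.gcd (1 - 4*x*z) (1 - 4*y*z))))) : ℤ)) :
    ∀ a ∈ ({x, y, z} : Set ℤ), ∀ b ∈ ({x, y, z} : Set ℤ), d ∣ 1 - 4 * a * b := by
  obtain ⟨hxx, hyy, hzz, hxy, hxz, hyz⟩ := by simpa only [Int.dvd_coe_gcd_iff] using h
  simp only [Set.mem_insert_iff, Set.mem_singleton_iff]
  rintro a (rfl | rfl | rfl) b (rfl | rfl | rfl) <;>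
    first | assumption | rwa [mul_assoc, ← sq] | rwa [mul_right_comm]

open Finset in
theorem stmt_10_general (n₁ n₂ n₃ : ℤ)
    (M : Matrix (Fin 2) (Fin 6) ℤ)
    (hM : M = !![1, -2*n₁, 1, -2*n₂, 1, -2*n₃;
                 -2*n₁, 1, -2*n₂, 1, -2*n₃, 1]) :
    Finset.univ.gcd (fun p : Fin 6 × Fin 6 => M 0 p.1 * M 1 p.2 - M 0 p.2 * M 1 p.1) =
    (Int.gcd (1 - 4*n₁^2) (Int.gcd (1 - 4*n₂^2) (Int.gcd (1 - 4*n₃^2)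
      (Int.gcd (1 - 4*n₁*n₂) (Int.gcd (1 - 4*n₁*n₃) (1 - 4*n₂*n₃))))) : ℤ) := by
  have hcol (j : Fin 6) : IsPairColumn {n₁, n₂, n₃} (fun i => M i j) := by
    subst hM
    fin_cases j
    all_goals first
      | exact ⟨_, by simp, .inl ⟨rfl, rfl⟩⟩
      | exact ⟨_, by simp, .inr ⟨rfl, rfl⟩⟩
  apply dvd_antisymm_of_normalize_eq Finset.normalize_gcd (Int.normalize_coe_nat _)
  · subst hM
    simp only [Int.dvd_coe_gcd_iff]
    refine ⟨(gcd_dvd (mem_univ (0, 1))).trans (dvd_of_eq ?_),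
      (gcd_dvd (mem_univ (2, 3))).trans (dvd_of_eq ?_),
      (gcd_dvd (mem_univ (4, 5))).trans (dvd_of_eq ?_),
      (gcd_dvd (mem_univ (0, 3))).trans (dvd_of_eq ?_),
      (gcd_dvd (mem_univ (0, 5))).trans (dvd_of_eq ?_),
      (gcd_dvd (mem_univ (2, 5))).trans (dvd_of_eq ?_)⟩
    all_goals
      simp only [Matrix.of_apply, Matrix.cons_val', Matrix.cons_val, Matrix.cons_val_zero,
        Matrix.cons_val_one, Matrix.cons_val_fin_one]
      ring
  · rw [Finset.dvd_gcd_iff]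
    rintro ⟨j, k⟩ -
    exact (hcol j).dvd_minor (dvd_one_sub_four_mul_of_dvd_gcd dvd_rfl) (hcol k)

open Finset in
theorem stmt_10 (n₁ n₂ n₃ : ℤ) (h₁ : 1 < n₁) (h₂ : 1 < n₂) (h₃ : 1 < n₃)
    (M : Matrix (Fin 2) (Fin 6) ℤ)
    (hM : M = !![1, -2*n₁, 1, -2*n₂, 1, -2*n₃;
                 -2*n₁, 1, -2*n₂, 1, -2*n₃, 1]) :
    Finset.univ.gcd (fun p : Fin 6 × Fin 6 => M 0 p.1 * M 1 p.2 - M 0 p.2 * M 1 p.1) =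
    (Int.gcd (1 - 4*n₁^2) (Int.gcd (1 - 4*n₂^2) (Int.gcd (1 - 4*n₃^2)
      (Int.gcd (1 - 4*n₁*n₂) (Int.gcd (1 - 4*n₁*n₃) (1 - 4*n₂*n₃))))) : ℤ) :=
  stmt_10_general n₁ n₂ n₃ M hM
end

section
/- Let $a, b, c$ be odd integers with $d = \gcd(a,b,c)$. Then the gcd of the six products $\{ab, ac, bc, a^2, b^2, c^2\}$ equals $d^2$. -/
private lemma nat_gcd_six (A B C : ℕ) :
    Nat.gcd (A*B) (Nat.gcd (A*C) (Nat.gcd (B*C) (Nat.gcd (A^2) (Nat.gcd (B^2) (C^2))))) =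
      (Nat.gcd A (Nat.gcd B C))^2 := by
  set D := Nat.gcd A (Nat.gcd B C) with hD
  rcases Nat.eq_zero_or_pos D with h0 | hpos
  · have h0' : Nat.gcd A (Nat.gcd B C) = 0 := h0
    have hA' : A = 0 := Nat.eq_zero_of_gcd_eq_zero_left h0'
    have hBC : Nat.gcd B C = 0 := Nat.eq_zero_of_gcd_eq_zero_right h0'
    have hB : B = 0 := Nat.eq_zero_of_gcd_eq_zero_left hBC
    have hC : C = 0 := Nat.eq_zero_of_gcd_eq_zero_right hBC
    simp [hA', hB, hC, h0]
  · obtain ⟨A₁, hA⟩ : D ∣ A := Nat.gcd_dvd_left _ _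
    obtain ⟨B₁, hB⟩ : D ∣ B := (Nat.gcd_dvd_right _ _).trans (Nat.gcd_dvd_left _ _)
    obtain ⟨C₁, hC⟩ : D ∣ C := (Nat.gcd_dvd_right _ _).trans (Nat.gcd_dvd_right _ _)
    have hcop : Nat.gcd A₁ (Nat.gcd B₁ C₁) = 1 := by
      have : D * Nat.gcd A₁ (Nat.gcd B₁ C₁) = D * 1 := by
        rw [mul_one, ← Nat.gcd_mul_left, ← Nat.gcd_mul_left, ← hA, ← hB, ← hC, hD]
      exact Nat.eq_of_mul_eq_mul_left hpos this
    have key : Nat.gcd (A₁*B₁) (Nat.gcd (A₁*C₁) (Nat.gcd (B₁*C₁)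
        (Nat.gcd (A₁^2) (Nat.gcd (B₁^2) (C₁^2))))) = 1 := by
      by_contra hne
      obtain ⟨p, hp, hpd⟩ := Nat.exists_prime_and_dvd hne
      have h1 : p ∣ A₁ := hp.dvd_of_dvd_pow (hpd.trans
        ((Nat.gcd_dvd_right _ _).trans ((Nat.gcd_dvd_right _ _).trans
          ((Nat.gcd_dvd_right _ _).trans (Nat.gcd_dvd_left _ _)))))
      have h2 : p ∣ B₁ := hp.dvd_of_dvd_pow (hpd.trans
        ((Nat.gcd_dvd_right _ _).trans ((Nat.gcd_dvd_right _ _).trans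
          ((Nat.gcd_dvd_right _ _).trans ((Nat.gcd_dvd_right _ _).trans (Nat.gcd_dvd_left _ _))))))
      have h3 : p ∣ C₁ := hp.dvd_of_dvd_pow (hpd.trans
        ((Nat.gcd_dvd_right _ _).trans ((Nat.gcd_dvd_right _ _).trans
          ((Nat.gcd_dvd_right _ _).trans ((Nat.gcd_dvd_right _ _).trans (Nat.gcd_dvd_right _ _))))))
      have : p ∣ 1 := hcop ▸ Nat.dvd_gcd h1 (Nat.dvd_gcd h2 h3)
      exact hp.one_lt.ne' (Nat.dvd_one.mp this)
    have e1 : A*B = D^2 * (A₁*B₁) := by rw [hA, hB]; ring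
    have e2 : A*C = D^2 * (A₁*C₁) := by rw [hA, hC]; ring
    have e3 : B*C = D^2 * (B₁*C₁) := by rw [hB, hC]; ring
    have e4 : A^2 = D^2 * (A₁^2) := by rw [hA]; ring
    have e5 : B^2 = D^2 * (B₁^2) := by rw [hB]; ring
    have e6 : C^2 = D^2 * (C₁^2) := by rw [hC]; ring
    rw [e1, e2, e3, e4, e5, e6]
    simp only [Nat.gcd_mul_left]
    rw [key, mul_one]

theorem stmt_15 (a b c : ℤ) (ha : Odd a) (hb : Odd b) (hc : Odd c)
    (d : ℕ) (hd : d = Int.gcd a (Int.gcd b c)) :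
    Int.gcd (a*b) (Int.gcd (a*c) (Int.gcd (b*c) (Int.gcd (a^2) (Int.gcd (b^2) (c^2))))) = d^2 := by
  subst hd
  have := nat_gcd_six a.natAbs b.natAbs c.natAbs
  simpa [Int.gcd, Int.natAbs_mul, Int.natAbs_pow] using this
end
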